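/- arXiv:1509.07199 — 5 statements merged into one kernel-verified Lean document; each statement's English description precedes it below -/
import Mathlib

section
/- If a marking x enables every atom in an independent set S (no two distinct atoms of S share an agent), and an outcome r_i is fixed for each atom n_i in S, then there is a unique marking x' such that x --σ--> x' for every sequence σ in which each pair (n_i, r_i) appears exactly once; in particular x' depends only on the chosen outcomes and not on the order of occurrence. -/
structure Negotiation (A Atom Out : Type*) where
  n0 : Atom
  nf : Atom
  parties : Atom → Finset A
  parties_nonempty : ∀ n, (parties n).Nonempty
  mem_n0 : ∀ a, a ∈ parties n0
  mem_nf : ∀ a, a ∈ parties nf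
  outcomes : Atom → Finset Out
  outcomes_nonempty : ∀ n, (outcomes n).Nonempty
  X : Atom → A → Out → Set Atom
  Xf_empty : ∀ a r, X nf a r = ∅
  X_nonempty : ∀ n a r, n ≠ nf → a ∈ parties n → r ∈ outcomes n → (X n a r).Nonempty

namespace Negotiation

variable {A Atom Out : Type*}

/-- A marking `x` enables atom `n` iff every party of `n` is ready to engage in `n`. -/
def Enables (N : Negotiation A Atom Out) (x : A → Set Atom) (n : Atom) : Prop :=
  ∀ a ∈ N.parties n, n ∈ x a

open Classical in
/-- The marking obtained from `x` by the occurrence of `(n, r)`. -/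
noncomputable def step (N : Negotiation A Atom Out) (x : A → Set Atom) (n : Atom) (r : Out) :
    A → Set Atom :=
  fun a => if a ∈ N.parties n then N.X n a r else x a

/-- The initial marking. -/
def x0 (N : Negotiation A Atom Out) : A → Set Atom := fun _ => {N.n0}

/-- The final marking. -/
def xf (N : Negotiation A Atom Out) : A → Set Atom := fun _ => ∅

/-- Reachability by a finite occurrence sequence. -/
inductive Reach (N : Negotiation A Atom Out) : (A → Set Atom) → (A → Set Atom) → Prop
  | refl (x : A → Set Atom) : Reach N x x
  | tail {x y : A → Set Atom} (n : Atom) (r : Out) :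
      Reach N x y → N.Enables y n → r ∈ N.outcomes n → Reach N x (N.step y n r)

/-- An agent is deterministic if it is always ready to engage in exactly one atom. -/
def Det (N : Negotiation A Atom Out) (a : A) : Prop :=
  ∀ n r, n ≠ N.nf → a ∈ N.parties n → r ∈ N.outcomes n → ∃ m, N.X n a r = {m}

/-- Weakly deterministic type 2: every atom has a deterministic party. -/
def WD2 (N : Negotiation A Atom Out) : Prop :=
  ∀ n : Atom, ∃ a ∈ N.parties n, N.Det a

/-- Soundness: every atom can be enabled, and every occurrence sequence can be
extended to reach the final marking. -/
def Sound (N : Negotiation A Atom Out) : Prop :=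
  (∀ n : Atom, ∃ x, N.Reach N.x0 x ∧ N.Enables x n) ∧
  (∀ x, N.Reach N.x0 x → N.Reach x N.xf)

/-- A set of atoms is independent if no two distinct atoms share an agent. -/
def Indep (N : Negotiation A Atom Out) (S : Finset Atom) : Prop :=
  ∀ n ∈ S, ∀ n' ∈ S, n ≠ n' → Disjoint (N.parties n) (N.parties n')

open Classical in
/-- Simultaneous occurrence of an independent set `S` of atoms, with outcomes `F`. -/
noncomputable def execSet (N : Negotiation A Atom Out) (x : A → Set Atom)
    (S : Finset Atom) (F : Atom → Out) : A → Set Atom :=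
  fun a => if ∃ n ∈ S, a ∈ N.parties n
    then ⋃ n ∈ S.filter (fun n => a ∈ N.parties n), N.X n a (F n)
    else x a

/-- One step of the attractor construction (`N1` = atoms of Player 1). -/
def AttStep (N : Negotiation A Atom Out) (N1 : Set Atom) (T : Set Atom) : Set Atom :=
  T ∪ {n | n ∈ N1 ∧ ∃ r ∈ N.outcomes n, ∀ a ∈ N.parties n, N.Det a → N.X n a r ⊆ T}
    ∪ {n | n ∉ N1 ∧ ∀ r ∈ N.outcomes n, ∀ a ∈ N.parties n, N.Det a → N.X n a r ⊆ T}

/-- The attractor sequence `A_k` of the final atom. -/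
def Att (N : Negotiation A Atom Out) (N1 : Set Atom) : ℕ → Set Atom
  | 0 => {N.nf}
  | k + 1 => N.AttStep N1 (N.Att N1 k)

/-- The attractor of the final atom. -/
def attractor (N : Negotiation A Atom Out) (N1 : Set Atom) : Set Atom :=
  ⋃ k, N.Att N1 k

/-- The attractor index of an atom: the least `k` with `n ∈ A_k`. -/
noncomputable def attIdx (N : Negotiation A Atom Out) (N1 : Set Atom) (n : Atom) : ℕ :=
  sInf {k | n ∈ N.Att N1 k}

/-- The sequence of markings along a play of the termination game. -/
noncomputable def playMarks (N : Negotiation A Atom Out)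
    (p : ℕ → Option (Finset Atom × (Atom → Out))) : ℕ → (A → Set Atom)
  | 0 => N.x0
  | k + 1 =>
    match p k with
    | some SF => N.execSet (playMarks N p k) SF.1 SF.2
    | none => playMarks N p k

/-- Validity of a play: at each step the Scheduler picks a nonempty independent set of
enabled atoms with outcomes chosen for them; the play stops only at markings
enabling no atom. -/
def ValidPlay (N : Negotiation A Atom Out)
    (p : ℕ → Option (Finset Atom × (Atom → Out))) : Prop :=
  ∀ k, (∀ S F, p k = some (S, F) →
          S.Nonempty ∧ N.Indep S ∧ ∀ n ∈ S, N.Enables (N.playMarks p k) n ∧ F n ∈ N.outcomes n)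
    ∧ (p k = none → p (k + 1) = none ∧ ∀ n, ¬ N.Enables (N.playMarks p k) n)

/-- A play ends with the occurrence of the final atom. -/
def EndsWithFinal (N : Negotiation A Atom Out)
    (p : ℕ → Option (Finset Atom × (Atom → Out))) : Prop :=
  ∃ k S F, p k = some (S, F) ∧ N.nf ∈ S

end Negotiation

open Negotiation in
theorem foldl_eq_execSet {A Atom Out : Type*} [DecidableEq Atom]
    (N : Negotiation A Atom Out) (ρ : Atom → Out) :
    ∀ (σ : List Atom) (x : A → Set Atom), σ.Nodup → N.Indep σ.toFinset →
      σ.foldl (fun y n => N.step y n (ρ n)) x = N.execSet x σ.toFinset ρ := by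
  classical
  intro σ
  induction σ with
  | nil =>
    intro x _ _
    funext a
    simp [Negotiation.execSet]
  | cons n σ' ih =>
    intro x hnd hind
    have hnd' : σ'.Nodup := hnd.of_cons
    have hnmem : n ∉ σ' := (List.nodup_cons.mp hnd).1
    have hind' : N.Indep σ'.toFinset := by
      intro m hm m' hm' hne
      exact hind m (by simp [List.mem_toFinset.mp hm]) m'
        (by simp [List.mem_toFinset.mp hm']) hne
    have : (n :: σ').foldl (fun y n => N.step y n (ρ n)) x
        = σ'.foldl (fun y n => N.step y n (ρ n)) (N.step x n (ρ n)) := rfl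
    rw [this, ih _ hnd' hind']
    funext a
    simp only [Negotiation.execSet, Negotiation.step, List.toFinset_cons]
    by_cases h1 : ∃ m ∈ σ'.toFinset, a ∈ N.parties m
    · obtain ⟨m, hm, ham⟩ := h1
      have han : a ∉ N.parties n := by
        intro han
        have hne : n ≠ m := by
          intro e; subst e; exact hnmem (List.mem_toFinset.mp hm)
        exact Finset.disjoint_left.mp
          (hind n (by simp) m (by simp [List.mem_toFinset.mp hm]) hne) han ham
      rw [if_pos ⟨m, hm, ham⟩, if_pos ⟨m, by simp [hm], ham⟩]
      have hfil : (insert n σ'.toFinset).filter (fun m => a ∈ N.parties m)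
          = σ'.toFinset.filter (fun m => a ∈ N.parties m) := by
        ext k
        simp only [Finset.mem_filter, Finset.mem_insert]
        constructor
        · rintro ⟨hk | hk, hak⟩
          · exact absurd (hk ▸ hak) han
          · exact ⟨hk, hak⟩
        · rintro ⟨hk, hak⟩; exact ⟨Or.inr hk, hak⟩
      rw [hfil]
    · rw [if_neg h1]
      by_cases han : a ∈ N.parties n
      · rw [if_pos han, if_pos ⟨n, Finset.mem_insert_self _ _, han⟩]
        have hfil : (insert n σ'.toFinset).filter (fun m => a ∈ N.parties m) = {n} := by
          ext k
          simp only [Finset.mem_filter, Finset.mem_insert, Finset.mem_singleton]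
          constructor
          · rintro ⟨hk | hk, hak⟩
            · exact hk
            · exact absurd ⟨k, hk, hak⟩ h1
          · rintro rfl; exact ⟨Or.inl rfl, han⟩
        rw [hfil]
        simp
      · rw [if_neg han]
        rw [if_neg (by rintro ⟨m, hm, ham⟩
                       rcases Finset.mem_insert.mp hm with rfl | hm
                       · exact han ham
                       · exact h1 ⟨m, hm, ham⟩)]

open Negotiation in
/-- if a marking enables every atom of an independent set `S` and an
outcome `ρ n` is fixed for each `n ∈ S`, there is a unique marking reached by
executing the atoms of `S` (each exactly once, with the fixed outcomes) in any order. -/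
theorem unique_marking_of_independent_set {A Atom Out : Type*}
    (N : Negotiation A Atom Out) (x : A → Set Atom) (S : Finset Atom)
    (hind : N.Indep S) (hen : ∀ n ∈ S, N.Enables x n)
    (ρ : Atom → Out) (hρ : ∀ n ∈ S, ρ n ∈ N.outcomes n) :
    ∃! x' : A → Set Atom, ∀ σ : List Atom, σ.Nodup → (∀ n, n ∈ σ ↔ n ∈ S) →
      σ.foldl (fun y n => N.step y n (ρ n)) x = x' := by
  classical
  refine ⟨N.execSet x S ρ, ?_, ?_⟩
  · intro σ hnd hmem
    have hts : σ.toFinset = S := by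
      ext m; simp [hmem m]
    rw [foldl_eq_execSet N ρ σ x hnd (hts ▸ hind), hts]
  · intro y hy
    have hσ : ∀ n, n ∈ S.toList ↔ n ∈ S := by simp
    rw [← hy S.toList S.nodup_toList hσ,
        foldl_eq_execSet N ρ S.toList x S.nodup_toList (by simpa using hind)]
    congr 1
    simp
end

section
/- In a weakly deterministic type 2 negotiation, if at a marking x ≠ x_f every deterministic agent a satisfies x(a) = {nf}, then the only atom that can be enabled at x is nf; if moreover the negotiation is sound, then nf is enabled at x. -/
private lemma exists_enabled_of_reach {A Atom Out : Type*} (N : Negotiation A Atom Out)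
    {x z : A → Set Atom} (h : N.Reach x z) : z ≠ x → ∃ n, N.Enables x n := by
  induction h with
  | refl => intro h; exact absurd rfl h
  | @tail y n r hr he hro ih =>
    intro _
    by_cases hxy : y = x
    · exact ⟨n, hxy ▸ he⟩
    · exact ih hxy

open Negotiation in
/-- in a weakly deterministic type 2 negotiation, if at a reachable
marking `x ≠ x_f` every deterministic agent is ready exactly for `{nf}`, then only
`nf` can be enabled at `x`; if moreover the negotiation is sound, `nf` is enabled. -/
theorem only_final_enabled {A Atom Out : Type*}
    (N : Negotiation A Atom Out) (hW : N.WD2)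
    (x : A → Set Atom) (hreach : N.Reach N.x0 x) (hx : x ≠ N.xf)
    (hdet : ∀ a, N.Det a → x a = {N.nf}) :
    (∀ n, N.Enables x n → n = N.nf) ∧ (N.Sound → N.Enables x N.nf) := by
  have h1 : ∀ n, N.Enables x n → n = N.nf := by
    intro n hn
    obtain ⟨a, ha, hda⟩ := hW n
    have := hn a ha
    rw [hdet a hda] at this
    exact this
  refine ⟨h1, ?_⟩
  intro hs
  have hr : N.Reach x N.xf := hs.2 x hreach
  obtain ⟨n, hn⟩ := exists_enabled_of_reach N hr (Ne.symm hx)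
  exact h1 n hn ▸ hn
end

section
/- In a sound, weakly deterministic type 2 negotiation arena, if the initial atom n0 belongs to the attractor A of nf, then Player 1 has a (memoryless) winning strategy in the termination game: every play in which Player 1 always chooses, for atoms of N1 ∩ A, an outcome moving all deterministic parties to atoms of strictly smaller attractor index, ends with the occurrence of nf. -/
namespace Negotiation

variable {A Atom Out : Type*}

/-- Player 1 follows the attractor strategy: at every step, for every occurring atom
controlled by Player 1 that lies in the attractor, the chosen outcome moves every
deterministic party to an atom of the attractor with strictly smaller attractor index. -/
def FollowsAttr (N : Negotiation A Atom Out) (N1 : Set Atom)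
    (p : ℕ → Option (Finset Atom × (Atom → Out))) : Prop :=
  ∀ k S F, p k = some (S, F) → ∀ n ∈ S, n ∈ N1 → n ∈ N.attractor N1 →
    ∀ a ∈ N.parties n, N.Det a → ∀ m ∈ N.X n a (F n),
      m ∈ N.attractor N1 ∧ N.attIdx N1 m < N.attIdx N1 n

end Negotiation
namespace Negotiation

variable {A Atom Out : Type*}

lemma att_mono (N : Negotiation A Atom Out) (N1 : Set Atom) {j k : ℕ} (h : j ≤ k) :
    N.Att N1 j ⊆ N.Att N1 k := by
  induction h with
  | refl => exact subset_rfl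
  | step _ ih => exact ih.trans (fun n hn => Or.inl (Or.inl hn))

lemma mem_attractor_of_att {N : Negotiation A Atom Out} {N1 : Set Atom} {n : Atom} {k : ℕ}
    (h : n ∈ N.Att N1 k) : n ∈ N.attractor N1 := Set.mem_iUnion.2 ⟨k, h⟩

lemma attIdx_le {N : Negotiation A Atom Out} {N1 : Set Atom} {n : Atom} {k : ℕ}
    (h : n ∈ N.Att N1 k) : N.attIdx N1 n ≤ k := Nat.sInf_le h

lemma mem_att_attIdx {N : Negotiation A Atom Out} {N1 : Set Atom} {n : Atom}
    (h : n ∈ N.attractor N1) : n ∈ N.Att N1 (N.attIdx N1 n) := by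
  obtain ⟨k, hk⟩ := Set.mem_iUnion.1 h
  exact Nat.sInf_mem (⟨k, hk⟩ : {k | n ∈ N.Att N1 k}.Nonempty)

lemma attIdx_pos {N : Negotiation A Atom Out} {N1 : Set Atom} {n : Atom}
    (h : n ∈ N.attractor N1) (hn : n ≠ N.nf) : 0 < N.attIdx N1 n := by
  rcases Nat.eq_zero_or_pos (N.attIdx N1 n) with hz | hp
  · exfalso
    have := mem_att_attIdx h
    rw [hz] at this
    exact hn this
  · exact hp

lemma det_move_n2 {N : Negotiation A Atom Out} {N1 : Set Atom} {n : Atom} {a : A} {r : Out}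
    {m : Atom} (hA : n ∈ N.attractor N1) (h1 : n ∉ N1) (hnf : n ≠ N.nf)
    (hr : r ∈ N.outcomes n) (hp : a ∈ N.parties n) (hd : N.Det a) (hm : m ∈ N.X n a r) :
    m ∈ N.attractor N1 ∧ N.attIdx N1 m < N.attIdx N1 n := by
  have hjpos : 0 < N.attIdx N1 n := attIdx_pos hA hnf
  have hmem : n ∈ N.Att N1 (N.attIdx N1 n) := mem_att_attIdx hA
  obtain ⟨i, hi⟩ : ∃ i, N.attIdx N1 n = i + 1 := ⟨N.attIdx N1 n - 1, by omega⟩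
  rw [hi] at hmem
  have hni : n ∉ N.Att N1 i := by
    intro hcon
    have := attIdx_le hcon
    omega
  simp only [Att, AttStep, Set.mem_union, Set.mem_setOf_eq] at hmem
  rcases hmem with (h | h) | h
  · exact absurd h hni
  · exact absurd h.1 h1
  · have hmi := h.2 r hr a hp hd hm
    exact ⟨mem_attractor_of_att hmi, lt_of_le_of_lt (attIdx_le hmi) (by omega)⟩

end Negotiation
namespace Negotiation

variable {A Atom Out : Type*}

lemma execSet_eq_of_not (N : Negotiation A Atom Out) {x : A → Set Atom} {S : Finset Atom}
    {F : Atom → Out} {a : A} (h : ¬ ∃ n ∈ S, a ∈ N.parties n) :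
    N.execSet x S F a = x a := by
  unfold execSet
  rw [if_neg h]

lemma indep_subset {N : Negotiation A Atom Out} {S T : Finset Atom} (h : N.Indep T)
    (hST : S ⊆ T) : N.Indep S :=
  fun n hn n' hn' hne => h n (hST hn) n' (hST hn') hne

lemma execSet_eq_of_mem (N : Negotiation A Atom Out) {x : A → Set Atom} {S : Finset Atom}
    {F : Atom → Out} {a : A} {n : Atom} (hI : N.Indep S) (hn : n ∈ S)
    (ha : a ∈ N.parties n) : N.execSet x S F a = N.X n a (F n) := by
  classical
  have hcond : ∃ m ∈ S, a ∈ N.parties m := ⟨n, hn, ha⟩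
  unfold execSet
  rw [if_pos hcond]
  have hfil : S.filter (fun m => a ∈ N.parties m) = {n} := by
    ext m
    simp only [Finset.mem_filter, Finset.mem_singleton]
    constructor
    · rintro ⟨hm, ham⟩
      by_contra hmn
      exact Finset.disjoint_left.1 (hI m hm n hn hmn) ham ha
    · rintro rfl
      exact ⟨hn, ha⟩
  rw [hfil]
  simp

open Classical in
lemma execSet_insert (N : Negotiation A Atom Out) {x : A → Set Atom} {S : Finset Atom}
    {F : Atom → Out} {n : Atom} (hn : n ∉ S) (hI : N.Indep (insert n S)) :
    N.execSet x (insert n S) F = N.step (N.execSet x S F) n (F n) := by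
  classical
  have hIS : N.Indep S := indep_subset hI (Finset.subset_insert n S)
  funext a
  by_cases hap : a ∈ N.parties n
  · rw [execSet_eq_of_mem N hI (Finset.mem_insert_self n S) hap]
    unfold step
    rw [if_pos hap]
  · unfold step
    rw [if_neg hap]
    by_cases hex : ∃ m ∈ S, a ∈ N.parties m
    · obtain ⟨m, hm, ham⟩ := hex
      rw [execSet_eq_of_mem N hI (Finset.mem_insert_of_mem hm) ham,
        execSet_eq_of_mem N hIS hm ham]
    · rw [execSet_eq_of_not N hex, execSet_eq_of_not N]
      intro ⟨m, hm, ham⟩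
      rcases Finset.mem_insert.1 hm with rfl | hm'
      · exact hap ham
      · exact hex ⟨m, hm', ham⟩

lemma reach_execSet (N : Negotiation A Atom Out) {w x : A → Set Atom} (S : Finset Atom)
    (F : Atom → Out) :
    N.Indep S → (∀ n ∈ S, N.Enables x n ∧ F n ∈ N.outcomes n) → N.Reach w x →
      N.Reach w (N.execSet x S F) := by
  classical
  induction S using Finset.induction_on with
  | empty =>
    intro _ _ hR
    have : N.execSet x ∅ F = x := funext fun a => execSet_eq_of_not N (by simp)
    rwa [this]
  | @insert n S hn ih =>
    intro hI hE hR
    have hIS : N.Indep S := indep_subset hI (Finset.subset_insert n S)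
    have hR' := ih hIS (fun m hm => hE m (Finset.mem_insert_of_mem hm)) hR
    rw [execSet_insert N hn hI]
    refine Reach.tail n (F n) hR' ?_ (hE n (Finset.mem_insert_self n S)).2
    intro a hap
    rw [execSet_eq_of_not N]
    · exact (hE n (Finset.mem_insert_self n S)).1 a hap
    · intro ⟨m, hm, ham⟩
      have hmn : m ≠ n := fun h => hn (h ▸ hm)
      exact Finset.disjoint_left.1
        (hI m (Finset.mem_insert_of_mem hm) n (Finset.mem_insert_self n S) hmn) ham hap

lemma reach_playMarks (N : Negotiation A Atom Out)
    (p : ℕ → Option (Finset Atom × (Atom → Out))) (hv : N.ValidPlay p) :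
    ∀ k, N.Reach N.x0 (N.playMarks p k) := by
  intro k
  induction k with
  | zero => exact Reach.refl _
  | succ k ih =>
    cases hp : p k with
    | none => simpa [playMarks, hp] using ih
    | some SF =>
      have h := (hv k).1 SF.1 SF.2 (by rw [hp])
      simp only [playMarks, hp]
      exact reach_execSet N SF.1 SF.2 h.2.1 (fun n hn => h.2.2 n hn) ih

lemma reach_eq_of_no_enable (N : Negotiation A Atom Out) {x y : A → Set Atom}
    (h : N.Reach x y) (hne : ∀ n, ¬ N.Enables x n) : y = x := by
  induction h with
  | refl => rfl
  | tail n r hr he hro ih =>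
    subst ih
    exact absurd he (hne n)

end Negotiation

open Negotiation in
/-- in a sound, weakly deterministic type 2 negotiation arena, if
`n0` belongs to the attractor of `nf`, then every play in which Player 1 plays the
(memoryless) attractor strategy ends with the occurrence of `nf`:
Player 1 has a winning strategy in the termination game. -/
theorem attractor_strategy_wins {A Atom Out : Type*}
    (N : Negotiation A Atom Out) (N1 : Set Atom)
    (hs : N.Sound) (hW : N.WD2)
    (h0 : N.n0 ∈ N.attractor N1)
    (p : ℕ → Option (Finset Atom × (Atom → Out)))
    (hv : N.ValidPlay p) (ha : N.FollowsAttr N1 p) :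
    N.EndsWithFinal p := by
  classical
  by_contra hne
  have hnf : ∀ k S F, p k = some (S, F) → N.nf ∉ S := fun k S F h hm => hne ⟨k, S, F, h, hm⟩
  have inv : ∀ k, ∀ a, N.Det a →
      ∃ n, N.playMarks p k a = {n} ∧ n ∈ N.attractor N1 := by
    intro k
    induction k with
    | zero =>
      intro a _
      exact ⟨N.n0, rfl, h0⟩
    | succ k ih =>
      intro a hda
      cases hp : p k with
      | none =>
        simp only [playMarks, hp]
        exact ih a hda
      | some SF =>
        obtain ⟨S, F⟩ := SF
        obtain ⟨hSne, hInd, hmem⟩ := (hv k).1 S F hp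
        by_cases hex : ∃ n ∈ S, a ∈ N.parties n
        · obtain ⟨n, hnS, haP⟩ := hex
          obtain ⟨nn, hsing, hatt⟩ := ih a hda
          have hnx : n ∈ N.playMarks p k a := (hmem n hnS).1 a haP
          rw [hsing, Set.mem_singleton_iff] at hnx
          subst hnx
          have hnnf : n ≠ N.nf := fun h => hnf k S F hp (h ▸ hnS)
          obtain ⟨m, hXm⟩ := hda n (F n) hnnf haP (hmem n hnS).2
          have hstep : N.playMarks p (k+1) a = N.X n a (F n) := by
            simp only [playMarks, hp]
            exact execSet_eq_of_mem N hInd hnS haP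
          have hmX : m ∈ N.X n a (F n) := by rw [hXm]; exact rfl
          refine ⟨m, by rw [hstep, hXm], ?_⟩
          by_cases h1 : n ∈ N1
          · exact (ha k S F hp n hnS h1 hatt a haP hda m hmX).1
          · exact (det_move_n2 hatt h1 hnnf (hmem n hnS).2 haP hda hmX).1
        · obtain ⟨nn, hsing, hatt⟩ := ih a hda
          refine ⟨nn, ?_, hatt⟩
          simp only [playMarks, hp]
          rw [execSet_eq_of_not N hex, hsing]
  have gspec := fun (k : ℕ) (a : A) (h : N.Det a) => Classical.choose_spec (inv k a h)
  set g : ℕ → A → ℕ :=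
    fun k a => if h : N.Det a then N.attIdx N1 (Classical.choose (inv k a h)) else 0 with hg
  have hstepdec : ∀ k S F, p k = some (S, F) → ∀ a, N.Det a → ∀ n ∈ S, a ∈ N.parties n →
      g (k+1) a < g k a := by
    intro k S F hp a hda n hnS haP
    obtain ⟨hSne, hInd, hmem⟩ := (hv k).1 S F hp
    obtain ⟨hs1, hatt1⟩ := gspec k a hda
    obtain ⟨hs2, hatt2⟩ := gspec (k+1) a hda
    have hnx : n ∈ N.playMarks p k a := (hmem n hnS).1 a haP
    rw [hs1, Set.mem_singleton_iff] at hnx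
    have hnnf : n ≠ N.nf := fun h => hnf k S F hp (h ▸ hnS)
    obtain ⟨m, hXm⟩ := hda n (F n) hnnf haP (hmem n hnS).2
    have hstep : N.playMarks p (k+1) a = N.X n a (F n) := by
      simp only [playMarks, hp]
      exact execSet_eq_of_mem N hInd hnS haP
    have hm2 : Classical.choose (inv (k+1) a hda) = m :=
      Set.singleton_eq_singleton_iff.1 (hs2.symm.trans (hstep.trans hXm))
    have hmX : m ∈ N.X n a (F n) := by rw [hXm]; exact rfl
    rw [← hnx] at hatt1
    have hkey : N.attIdx N1 m < N.attIdx N1 n := by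
      by_cases h1 : n ∈ N1
      · exact (ha k S F hp n hnS h1 hatt1 a haP hda m hmX).2
      · exact (det_move_n2 hatt1 h1 hnnf (hmem n hnS).2 haP hda hmX).2
    simp only [hg, dif_pos hda, hm2, ← hnx]
    exact hkey
  have hstepeq : ∀ k a, N.playMarks p (k+1) a = N.playMarks p k a → g (k+1) a = g k a := by
    intro k a hEq
    by_cases hda : N.Det a
    · have hc : Classical.choose (inv (k+1) a hda) = Classical.choose (inv k a hda) :=
        Set.singleton_eq_singleton_iff.1
          ((gspec (k+1) a hda).1.symm.trans (hEq.trans (gspec k a hda).1))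
      simp only [hg, dif_pos hda, hc]
    · simp only [hg, dif_neg hda]
  have hnone : ∀ k, p k ≠ none := by
    intro k hpk
    have hno := ((hv k).2 hpk).2
    have hxf := reach_eq_of_no_enable N (hs.2 _ (reach_playMarks N p hv k)) hno
    obtain ⟨a0, ha0, hda0⟩ := hW N.n0
    obtain ⟨n, hsing, _⟩ := inv k a0 hda0
    have h2 : N.xf a0 = {n} := (congrFun hxf a0).trans hsing
    simp only [xf] at h2
    exact (Set.singleton_ne_empty n) h2.symm
  have hdec : ∀ k, (∑ a ∈ N.parties N.n0, g (k+1) a) < ∑ a ∈ N.parties N.n0, g k a := by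
    intro k
    cases hp : p k with
    | none => exact absurd hp (hnone k)
    | some SF =>
      obtain ⟨S, F⟩ := SF
      obtain ⟨hSne, hInd, hmem⟩ := (hv k).1 S F hp
      obtain ⟨n, hnS⟩ := hSne
      obtain ⟨b, hbP, hdb⟩ := hW n
      apply Finset.sum_lt_sum
      · intro a _
        by_cases hex : ∃ n' ∈ S, a ∈ N.parties n'
        · by_cases hda : N.Det a
          · obtain ⟨n', hn', haP'⟩ := hex
            exact le_of_lt (hstepdec k S F hp a hda n' hn' haP')
          · simp only [hg, dif_neg hda]
            exact le_refl 0
        · refine le_of_eq (hstepeq k a ?_)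
          simp only [playMarks, hp]
          exact execSet_eq_of_not N hex
      · exact ⟨b, N.mem_n0 b, hstepdec k S F hp b hdb n hnS hbP⟩
  have hmono : ∀ k, (∑ a ∈ N.parties N.n0, g k a) + k ≤ ∑ a ∈ N.parties N.n0, g 0 a := by
    intro k
    induction k with
    | zero => simp
    | succ k ih =>
      have := hdec k
      omega
  have := hmono ((∑ a ∈ N.parties N.n0, g 0 a) + 1)
  omega
end

section
/- Let A be the attractor of nf and suppose Player 1 plays the attractor strategy. If at a marking x ≠ x_f every deterministic agent is ready to engage only in atoms of A (x(a) ⊆ A for deterministic a), then after any game step (occurrence of an independent set of enabled atoms with Player 1's atoms resolved by the attractor strategy), the resulting marking again has every deterministic agent ready to engage only in atoms of A. -/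
open Negotiation in
/-- if at a marking `x ≠ x_f` every deterministic agent is ready only
for atoms of the attractor, then after one game step (an independent set `S` of
enabled atoms occurring, Player 1's atoms resolved by the attractor strategy) every
deterministic agent is again ready only for atoms of the attractor. -/
theorem attractor_invariant_step {A Atom Out : Type*}
    (N : Negotiation A Atom Out) (N1 : Set Atom) (hW : N.WD2)
    (x : A → Set Atom) (hx : x ≠ N.xf)
    (h : ∀ a, N.Det a → x a ⊆ N.attractor N1)
    (S : Finset Atom) (hSne : S.Nonempty) (hind : N.Indep S)
    (hen : ∀ n ∈ S, N.Enables x n)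
    (F : Atom → Out) (hF : ∀ n ∈ S, F n ∈ N.outcomes n)
    (hstrat : ∀ n ∈ S, n ∈ N1 → ∀ a ∈ N.parties n, N.Det a →
      ∀ m ∈ N.X n a (F n), m ∈ N.attractor N1 ∧ N.attIdx N1 m < N.attIdx N1 n) :
    ∀ a, N.Det a → N.execSet x S F a ⊆ N.attractor N1 := by
  -- auxiliary: atoms of the attractor not in N1 send all det parties into the attractor
  have aux : ∀ k n, n ∈ N.Att N1 k → n ∉ N1 → ∀ r ∈ N.outcomes n, ∀ a ∈ N.parties n,
      N.Det a → N.X n a r ⊆ N.attractor N1 := by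
    intro k
    induction k with
    | zero =>
      intro n hn _ r _ a _ _
      simp only [Att, Set.mem_singleton_iff] at hn
      subst hn
      rw [N.Xf_empty]
      exact Set.empty_subset _
    | succ k ih =>
      intro n hn hn1 r hr a ha hda
      simp only [Att, AttStep, Set.mem_union, Set.mem_setOf_eq] at hn
      rcases hn with (hn | hn) | hn
      · exact ih n hn hn1 r hr a ha hda
      · exact absurd hn.1 hn1
      · exact (hn.2 r hr a ha hda).trans (Set.subset_iUnion (N.Att N1) k)
  intro a hda m hm
  unfold execSet at hm
  split_ifs at hm with hcase
  · simp only [Set.mem_iUnion, Finset.mem_filter] at hm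
    obtain ⟨n, ⟨hnS, han⟩, hmX⟩ := hm
    by_cases hn1 : n ∈ N1
    · exact (hstrat n hnS hn1 a han hda m hmX).1
    · have hnx : n ∈ x a := hen n hnS a han
      have : n ∈ N.attractor N1 := h a hda hnx
      obtain ⟨k, hk⟩ := Set.mem_iUnion.mp this
      exact aux k n hk hn1 (F n) (hF n hnS) a han hda hmX
  · exact h a hda hm
end

section
/- If Player 1 follows the attractor strategy from a marking whose attractor position vector is P, and a game step occurs in which at least one atom controlled by Player 1 occurs, then the attractor position vector P' of the resulting marking satisfies P' ≺ P (componentwise ≤ with strict decrease in some component). -/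
namespace Negotiation

variable {A Atom Out : Type*}

/-- The attractor position of an agent at a marking: the least `k` such that the
agent is only ready for atoms of `A_k`. -/
noncomputable def posOf (N : Negotiation A Atom Out) (N1 : Set Atom)
    (x : A → Set Atom) (a : A) : ℕ :=
  sInf {k | x a ⊆ N.Att N1 k}

end Negotiation

/-!
A deterministic party of an atom `n` of the step moves to a single atom `m` with
`attIdx m < attIdx n ≤ (old position)`, so its position drops strictly. For atoms of Player 1
the inequality `attIdx m < attIdx n` is the attractor strategy; an atom `n ∉ N1` of the attractor
entered `A_{k+1}` through the clause quantifying over all outcomes, so every outcome leads its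
deterministic parties into `A_k`. Agents outside the step keep their position, and the Player 1
atom of the step has a deterministic party because the arena is weakly deterministic of type 2.
-/

namespace Negotiation

variable {A Atom Out : Type*} (N : Negotiation A Atom Out) (N1 : Set Atom)

section Attractor

lemma att_mono_s19 : Monotone (N.Att N1) :=
  monotone_nat_of_le_succ fun _ _ hm => Or.inl (Or.inl hm)

variable {N N1}

lemma attIdx_le_of_mem_att {m : Atom} {k : ℕ} (hm : m ∈ N.Att N1 k) : N.attIdx N1 m ≤ k :=
  Nat.sInf_le hm

lemma mem_att_attIdx_s19 {m : Atom} (hm : m ∈ N.attractor N1) : m ∈ N.Att N1 (N.attIdx N1 m) :=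
  Nat.sInf_mem (Set.mem_iUnion.mp hm)

lemma exists_subset_att_of_finite {s : Set Atom} (hfin : s.Finite) (hs : s ⊆ N.attractor N1) :
    ∃ k, s ⊆ N.Att N1 k := by
  simpa using (N.att_mono_s19 N1).directed_le.exists_mem_subset_of_finset_subset_biUnion
    (s := hfin.toFinset) (by simpa [attractor] using hs)

lemma attIdx_lt_of_notMem {n m : Atom} {a : A} {r : Out}
    (hn : n ∈ N.attractor N1) (hn1 : n ∉ N1) (hr : r ∈ N.outcomes n) (ha : a ∈ N.parties n)
    (hda : N.Det a) (hm : m ∈ N.X n a r) : N.attIdx N1 m < N.attIdx N1 n := by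
  have hnk := mem_att_attIdx_s19 hn
  obtain ⟨j, hj⟩ : ∃ j, N.attIdx N1 n = j + 1 := by
    refine Nat.exists_eq_succ_of_ne_zero fun h0 => ?_
    rw [h0, Att, Set.mem_singleton_iff] at hnk
    subst hnk
    simp [Xf_empty] at hm
  rw [hj] at hnk
  have hmj : m ∈ N.Att N1 j := by
    rcases hnk with (hnj | ⟨hn1', -⟩) | ⟨-, hall⟩
    · have := attIdx_le_of_mem_att hnj
      omega
    · exact absurd hn1' hn1
    · exact hall r hr a ha hda hm
  rw [hj]
  exact Nat.lt_succ_of_le (attIdx_le_of_mem_att hmj)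

end Attractor

section Position

variable {N N1} {x : A → Set Atom} {a : A}

lemma subset_att_posOf (hfin : (x a).Finite) (hsub : x a ⊆ N.attractor N1) :
    x a ⊆ N.Att N1 (N.posOf N1 x a) :=
  Nat.sInf_mem (exists_subset_att_of_finite hfin hsub)

lemma attIdx_le_posOf {n : Atom} (hfin : (x a).Finite) (hsub : x a ⊆ N.attractor N1)
    (hn : n ∈ x a) : N.attIdx N1 n ≤ N.posOf N1 x a :=
  attIdx_le_of_mem_att (subset_att_posOf hfin hsub hn)

lemma posOf_eq_attIdx_of_eq_singleton {m : Atom} (h : x a = {m}) :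
    N.posOf N1 x a = N.attIdx N1 m := by
  simp [posOf, attIdx, h]

end Position

section ExecSet

variable {N N1} {x : A → Set Atom} {S : Finset Atom} {F : Atom → Out} {a : A}

lemma execSet_of_mem_parties (hind : N.Indep S) {n : Atom} (hnS : n ∈ S)
    (ha : a ∈ N.parties n) : N.execSet x S F a = N.X n a (F n) := by
  classical
  have hfilter : S.filter (fun n' => a ∈ N.parties n') = {n} := by
    ext n'
    simp only [Finset.mem_filter, Finset.mem_singleton]
    refine ⟨fun ⟨hn'S, ha'⟩ => ?_, fun h => h ▸ ⟨hnS, ha⟩⟩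
    by_contra hne
    exact Finset.disjoint_left.mp (hind n' hn'S n hnS hne) ha' ha
  simp only [execSet, if_pos (⟨n, hnS, ha⟩ : ∃ n ∈ S, a ∈ N.parties n), hfilter]
  simp

lemma posOf_execSet_of_forall_notMem (h : ∀ n ∈ S, a ∉ N.parties n) :
    N.posOf N1 (N.execSet x S F) a = N.posOf N1 x a := by
  have hx : N.execSet x S F a = x a := if_neg fun ⟨n, hnS, ha⟩ => h n hnS ha
  simp only [posOf, hx]

lemma posOf_execSet_lt (hind : N.Indep S) {n : Atom} (hnS : n ∈ S) (hnf : n ≠ N.nf)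
    (hF : F n ∈ N.outcomes n) (ha : a ∈ N.parties n) (hda : N.Det a)
    (hfin : (x a).Finite) (hsub : x a ⊆ N.attractor N1) (hen : n ∈ x a)
    (hdesc : ∀ m ∈ N.X n a (F n), N.attIdx N1 m < N.attIdx N1 n) :
    N.posOf N1 (N.execSet x S F) a < N.posOf N1 x a := by
  obtain ⟨m, hm⟩ := hda n (F n) hnf ha hF
  calc N.posOf N1 (N.execSet x S F) a = N.attIdx N1 m :=
        posOf_eq_attIdx_of_eq_singleton ((execSet_of_mem_parties hind hnS ha).trans hm)
    _ < N.attIdx N1 n := hdesc m (hm ▸ rfl)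
    _ ≤ N.posOf N1 x a := attIdx_le_posOf hfin hsub hen

end ExecSet

end Negotiation

open Negotiation in
theorem position_vector_decreases_general {A Atom Out : Type*}
    (N : Negotiation A Atom Out) (N1 : Set Atom) (hW : N.WD2)
    (x : A → Set Atom)
    (hx : ∀ a, N.Det a → x a ⊆ N.attractor N1 ∧ (x a).Finite)
    (S : Finset Atom) (hind : N.Indep S)
    (hen : ∀ n ∈ S, N.Enables x n)
    (F : Atom → Out) (hF : ∀ n ∈ S, F n ∈ N.outcomes n)
    (hnfS : N.nf ∉ S)
    (hP1 : ∃ n ∈ S, n ∈ N1)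
    (hstrat : ∀ n ∈ S, n ∈ N1 → ∀ a ∈ N.parties n, N.Det a →
      ∀ m ∈ N.X n a (F n), m ∈ N.attractor N1 ∧ N.attIdx N1 m < N.attIdx N1 n) :
    (∀ a, N.Det a → N.posOf N1 (N.execSet x S F) a ≤ N.posOf N1 x a) ∧
    (∃ a, N.Det a ∧ N.posOf N1 (N.execSet x S F) a < N.posOf N1 x a) := by
  have hdesc : ∀ n ∈ S, ∀ a ∈ N.parties n, N.Det a →
      ∀ m ∈ N.X n a (F n), N.attIdx N1 m < N.attIdx N1 n := by
    intro n hnS a ha hda m hm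
    by_cases hn1 : n ∈ N1
    · exact (hstrat n hnS hn1 a ha hda m hm).2
    · obtain ⟨b, hb, hdb⟩ := hW n
      have hnA : n ∈ N.attractor N1 := (hx b hdb).1 (hen n hnS b hb)
      exact attIdx_lt_of_notMem hnA hn1 (hF n hnS) ha hda hm
  have hlt : ∀ n ∈ S, ∀ a ∈ N.parties n, N.Det a →
      N.posOf N1 (N.execSet x S F) a < N.posOf N1 x a := fun n hnS a ha hda =>
    posOf_execSet_lt hind hnS (fun h => hnfS (h ▸ hnS)) (hF n hnS) ha hda (hx a hda).2
      (hx a hda).1 (hen n hnS a ha) (hdesc n hnS a ha hda)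
  refine ⟨fun a hda => ?_, ?_⟩
  · by_cases h : ∃ n ∈ S, a ∈ N.parties n
    · obtain ⟨n, hnS, ha⟩ := h
      exact (hlt n hnS a ha hda).le
    · push Not at h
      exact (posOf_execSet_of_forall_notMem h).le
  · obtain ⟨n, hnS, -⟩ := hP1
    obtain ⟨a, ha, hda⟩ := hW n
    exact ⟨a, hda, hlt n hnS a ha hda⟩

open Negotiation in
/-- if Player 1 follows the attractor strategy and a game step occurs
(in which at least one atom controlled by Player 1 occurs), then the attractor
position vector strictly decreases: every deterministic agent's position is
non-increasing and some deterministic agent's position strictly decreases. -/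
theorem position_vector_decreases {A Atom Out : Type*}
    (N : Negotiation A Atom Out) (N1 : Set Atom) (hW : N.WD2)
    (x : A → Set Atom)
    (hx : ∀ a, N.Det a → x a ⊆ N.attractor N1 ∧ (x a).Finite)
    (S : Finset Atom) (hSne : S.Nonempty) (hind : N.Indep S)
    (hen : ∀ n ∈ S, N.Enables x n)
    (F : Atom → Out) (hF : ∀ n ∈ S, F n ∈ N.outcomes n)
    (hnfS : N.nf ∉ S)
    (hP1 : ∃ n ∈ S, n ∈ N1)
    (hstrat : ∀ n ∈ S, n ∈ N1 → ∀ a ∈ N.parties n, N.Det a →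
      ∀ m ∈ N.X n a (F n), m ∈ N.attractor N1 ∧ N.attIdx N1 m < N.attIdx N1 n) :
    (∀ a, N.Det a → N.posOf N1 (N.execSet x S F) a ≤ N.posOf N1 x a) ∧
    (∃ a, N.Det a ∧ N.posOf N1 (N.execSet x S F) a < N.posOf N1 x a) :=
  position_vector_decreases_general N N1 hW x hx S hind hen F hF hnfS hP1 hstrat
end
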